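/- Let d*_{h,s,a} denote the maximal occupancy of (h,s,a) over Markovian policies, attained by policies π*_{h,s,a}, and suppose the set of occupancy measures of Markovian policies is convex. Then the mixture policy π_u whose occupancy is d^{π_u}_h(s,a) = (1/(SAH)) Σ_{h',s',a'} d^{π*_{h',s',a'}}_h(s,a) satisfies d^{π_u}_h(s,a) ≥ d*_h(s)/(SAH) for all (h,s,a); consequently max_π min_{h,s,a} d^π_h(s,a)/d*_h(s) ≥ 1/(SAH). -/

import Mathlib

/-! The occupancy of the mixture `π_u` at `(h,s,a)` is an average of `SAH` nonnegative terms,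
one of which is the occupancy of `π*_{h,s,a}` at `(h,s,a)`, i.e. `d*_h(s)`. Hence it is at least
`d*_h(s)/(SAH)`, and `π_u` itself witnesses the max–min bound. -/

open scoped ENNReal

/-- A Markovian policy: a distribution over actions at each timestep and state. -/
def IsPolicy {S A : Type} [Fintype A] (π : ℕ → S → A → ℝ) : Prop :=
  ∀ h s, (∀ a, 0 ≤ π h s a) ∧ ∑ a, π h s a = 1

/-- State occupancy measure of a Markovian policy `π` in an MDP with
transition kernel `P` and initial distribution `μ` (timesteps `0, 1, 2, ...`). -/
noncomputable def occ {S A : Type} [Fintype S] [Fintype A]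
    (P : ℕ → S → A → S → ℝ) (μ : S → ℝ) (π : ℕ → S → A → ℝ) : ℕ → S → ℝ
  | 0 => μ
  | h + 1 => fun s' => ∑ s, ∑ a, occ P μ π h s * π h s a * P h s a s'

/-- State-action occupancy measure. -/
noncomputable def occSA {S A : Type} [Fintype S] [Fintype A]
    (P : ℕ → S → A → S → ℝ) (μ : S → ℝ) (π : ℕ → S → A → ℝ)
    (h : ℕ) (s : S) (a : A) : ℝ :=
  occ P μ π h s * π h s a

/-- Ratio with the convention `a / 0 = +∞`. -/
noncomputable def erat (a b : ℝ) : ℝ≥0∞ :=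
  if b = 0 then ⊤ else ENNReal.ofReal (a / b)

lemma occ_nonneg {S A : Type} [Fintype S] [Fintype A] {P : ℕ → S → A → S → ℝ}
    {μ : S → ℝ} {π : ℕ → S → A → ℝ} (hP : ∀ h s a s', 0 ≤ P h s a s') (hμ : ∀ s, 0 ≤ μ s)
    (hπ : ∀ h s a, 0 ≤ π h s a) (h : ℕ) (s : S) : 0 ≤ occ P μ π h s := by
  induction h generalizing s with
  | zero => exact hμ s
  | succ h ih =>
    exact Finset.sum_nonneg fun s' _ => Finset.sum_nonneg fun a _ =>
      mul_nonneg (mul_nonneg (ih s') (hπ h s' a)) (hP h s' a s)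

lemma occSA_nonneg {S A : Type} [Fintype S] [Fintype A] {P : ℕ → S → A → S → ℝ}
    {μ : S → ℝ} {π : ℕ → S → A → ℝ} (hP : ∀ h s a s', 0 ≤ P h s a s') (hμ : ∀ s, 0 ≤ μ s)
    (hπ : ∀ h s a, 0 ≤ π h s a) (h : ℕ) (s : S) (a : A) : 0 ≤ occSA P μ π h s a :=
  mul_nonneg (occ_nonneg hP hμ hπ h s) (hπ h s a)

lemma Finset.single_le_sum_sum_sum {ι κ ν M : Type*} [Fintype κ] [Fintype ν]
    [AddCommMonoid M] [PartialOrder M] [IsOrderedAddMonoid M] {s : Finset ι}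
    {f : ι → κ → ν → M} (hf : ∀ i ∈ s, ∀ j k, 0 ≤ f i j k) {i : ι} (hi : i ∈ s) (j : κ) (k : ν) :
    f i j k ≤ ∑ i ∈ s, ∑ j, ∑ k, f i j k :=
  calc f i j k ≤ ∑ k, f i j k :=
        Finset.single_le_sum (fun k _ => hf i hi j k) (Finset.mem_univ k)
    _ ≤ ∑ j, ∑ k, f i j k :=
        Finset.single_le_sum (fun j _ => Finset.sum_nonneg fun k _ => hf i hi j k)
          (Finset.mem_univ j)
    _ ≤ ∑ i ∈ s, ∑ j, ∑ k, f i j k :=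
        Finset.single_le_sum (fun i hi => Finset.sum_nonneg fun j _ =>
          Finset.sum_nonneg fun k _ => hf i hi j k) hi

lemma one_div_le_erat_of_div_le {a b : ℝ} {n : ℕ} (hb : 0 ≤ b) (hn : 0 < n)
    (hab : b / n ≤ a) : 1 / (n : ℝ≥0∞) ≤ erat a b := by
  unfold erat
  split_ifs with hb0
  · exact le_top
  have hn' : (0 : ℝ) < n := Nat.cast_pos.2 hn
  rw [← ENNReal.ofReal_one, ← ENNReal.ofReal_natCast, ← ENNReal.ofReal_div_of_pos hn']
  refine ENNReal.ofReal_le_ofReal ?_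
  rw [div_le_div_iff₀ hn' (lt_of_le_of_ne hb (Ne.symm hb0))]
  rw [div_le_iff₀ hn'] at hab
  linarith

theorem mixture_policy_occupancy_ge_general
    {S A : Type} [Fintype S] [Fintype A]
    (H : ℕ) (P : ℕ → S → A → S → ℝ)
    (hP : ∀ h s a, (∀ s', 0 ≤ P h s a s') ∧ ∑ s', P h s a s' = 1)
    (μ : S → ℝ) (hμnn : ∀ s, 0 ≤ μ s)
    (πstar : ℕ → S → A → (ℕ → S → A → ℝ))
    (hstarPol : ∀ h s a, IsPolicy (πstar h s a))
    (hstarMax : ∀ h < H, ∀ (s : S) (a : A),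
      occSA P μ (πstar h s a) h s a
        = ⨆ π : {π : ℕ → S → A → ℝ // IsPolicy π}, occ P μ π.1 h s)
    (πu : ℕ → S → A → ℝ) (huPol : IsPolicy πu)
    (hu : ∀ h < H, ∀ (s : S) (a : A),
      occSA P μ πu h s a
        = (1 / (Fintype.card S * Fintype.card A * H : ℝ)) *
            ∑ h' ∈ Finset.range H, ∑ s' : S, ∑ a' : A,
              occSA P μ (πstar h' s' a') h s a) :
    (∀ h < H, ∀ (s : S) (a : A),
        (⨆ π : {π : ℕ → S → A → ℝ // IsPolicy π}, occ P μ π.1 h s) /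
            (Fintype.card S * Fintype.card A * H : ℝ)
          ≤ occSA P μ πu h s a) ∧
    (1 : ℝ≥0∞) / (Fintype.card S * Fintype.card A * H : ℕ)
      ≤ ⨆ π : {π : ℕ → S → A → ℝ // IsPolicy π},
          ⨅ x : Fin H × S × A,
            erat (occSA P μ π.1 x.1 x.2.1 x.2.2)
              (⨆ π' : {π : ℕ → S → A → ℝ // IsPolicy π}, occ P μ π'.1 x.1 x.2.1) := by
  have hstar_nonneg : ∀ h' s' a' h s a, 0 ≤ occSA P μ (πstar h' s' a') h s a :=
    fun h' s' a' => occSA_nonneg (fun h s a => (hP h s a).1) hμnn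
      (fun h s => (hstarPol h' s' a' h s).1)
  have mixture_ge : ∀ h < H, ∀ (s : S) (a : A),
      (⨆ π : {π : ℕ → S → A → ℝ // IsPolicy π}, occ P μ π.1 h s) /
          (Fintype.card S * Fintype.card A * H : ℝ) ≤ occSA P μ πu h s a := by
    intro h hh s a
    rw [← hstarMax h hh s a, hu h hh s a, ← one_div_mul_eq_div]
    gcongr
    exact Finset.single_le_sum_sum_sum (fun h' _ s' a' => hstar_nonneg h' s' a' h s a)
      (Finset.mem_range.2 hh) s a
  refine ⟨mixture_ge, le_iSup_of_le ⟨πu, huPol⟩ (le_iInf fun ⟨⟨h, hh⟩, s, a⟩ => ?_)⟩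
  have hcard : 0 < Fintype.card S * Fintype.card A * H :=
    Nat.mul_pos (Nat.mul_pos (Fintype.card_pos_iff.2 ⟨s⟩) (Fintype.card_pos_iff.2 ⟨a⟩))
      (Nat.zero_lt_of_lt hh)
  refine one_div_le_erat_of_div_le ?_ hcard ?_
  · exact hstarMax h hh s a ▸ hstar_nonneg h s a h s a
  · exact_mod_cast mixture_ge h hh s a

/-- If `π*_{h,s,a}` attains the maximal occupancy `d*_h(s)` at `(h,s,a)` and `π_u`
is the mixture policy whose occupancy is the average of the occupancies of the
`π*_{h',s',a'}`, then `d^{π_u}_h(s,a) ≥ d*_h(s)/(SAH)` for all `(h,s,a)`;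
consequently `max_π min_{h,s,a} d^π_h(s,a)/d*_h(s) ≥ 1/(SAH)`. -/
theorem mixture_policy_occupancy_ge
    {S A : Type} [Fintype S] [Fintype A] [Nonempty S] [Nonempty A]
    (H : ℕ) (hH : 0 < H) (P : ℕ → S → A → S → ℝ)
    (hP : ∀ h s a, (∀ s', 0 ≤ P h s a s') ∧ ∑ s', P h s a s' = 1)
    (μ : S → ℝ) (hμnn : ∀ s, 0 ≤ μ s) (hμ1 : ∑ s, μ s = 1)
    (πstar : ℕ → S → A → (ℕ → S → A → ℝ))
    (hstarPol : ∀ h s a, IsPolicy (πstar h s a))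
    (hstarMax : ∀ h < H, ∀ (s : S) (a : A),
      occSA P μ (πstar h s a) h s a
        = ⨆ π : {π : ℕ → S → A → ℝ // IsPolicy π}, occ P μ π.1 h s)
    (πu : ℕ → S → A → ℝ) (huPol : IsPolicy πu)
    (hu : ∀ h < H, ∀ (s : S) (a : A),
      occSA P μ πu h s a
        = (1 / (Fintype.card S * Fintype.card A * H : ℝ)) *
            ∑ h' ∈ Finset.range H, ∑ s' : S, ∑ a' : A,
              occSA P μ (πstar h' s' a') h s a) :
    (∀ h < H, ∀ (s : S) (a : A),
        (⨆ π : {π : ℕ → S → A → ℝ // IsPolicy π}, occ P μ π.1 h s) /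
            (Fintype.card S * Fintype.card A * H : ℝ)
          ≤ occSA P μ πu h s a) ∧
    (1 : ℝ≥0∞) / (Fintype.card S * Fintype.card A * H : ℕ)
      ≤ ⨆ π : {π : ℕ → S → A → ℝ // IsPolicy π},
          ⨅ x : Fin H × S × A,
            erat (occSA P μ π.1 x.1 x.2.1 x.2.2)
              (⨆ π' : {π : ℕ → S → A → ℝ // IsPolicy π}, occ P μ π'.1 x.1 x.2.1) :=
  mixture_policy_occupancy_ge_general H P hP μ hμnn πstar hstarPol hstarMax πu huPol hu
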